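/- arXiv:2602.08650 — 7 statements merged into one kernel-verified Lean document; each statement's English description precedes it below -/
import Mathlib

section
/- Let g be the metric Lie algebra on basis e1,e2,e3,e4 with brackets [e1,e4]=η1 e1 − γ1 e2 − γ2 e3, [e2,e4]=γ1 e1 + η2 e2 − γ3 e3, [e3,e4]=γ2 e1 + γ3 e2 + η3 e3, equipped with the inner product making e1,e2,e3 orthonormal spacelike and e4 unit timelike. Then the scalar curvature of the associated left-invariant metric equals 2(η1² + η2² + η3² + η1η2 + η1η3 + η2η3), and this quantity vanishes if and only if η1 = η2 = η3 = 0. -/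
noncomputable section

open Finset Polynomial

abbrev V : Type := Fin 4 → ℝ

def e (i : Fin 4) : V := Pi.single i 1

/-- bilinear bracket determined by structure constants `c`. -/
def br (c : Fin 4 → Fin 4 → V) (x y : V) : V :=
  ∑ i : Fin 4, ∑ j : Fin 4, (x i * y j) • c i j

/-- bilinear form determined by the matrix `G`. -/
def gmet (G : Matrix (Fin 4) (Fin 4) ℝ) (x y : V) : ℝ :=
  ∑ i : Fin 4, ∑ j : Fin 4, x i * y j * G i j

/-- `D` satisfies the Koszul formula of the Levi-Civita connection. -/
def Koszul (G : Matrix (Fin 4) (Fin 4) ℝ) (c : Fin 4 → Fin 4 → V) (D : V → V → V) : Prop :=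
  ∀ x y z : V, 2 * gmet G (D x y) z =
    gmet G (br c x y) z - gmet G (br c y z) x + gmet G (br c z x) y

/-- curvature tensor `R(x,y)z`. -/
def Rcurv (c : Fin 4 → Fin 4 → V) (D : V → V → V) (x y z : V) : V :=
  D x (D y z) - D y (D x z) - D (br c x y) z

/-- Ricci tensor `ρ(x,y) = tr (z ↦ R(z,x)y)`. -/
def ricciT (c : Fin 4 → Fin 4 → V) (D : V → V → V) (x y : V) : ℝ :=
  ∑ i : Fin 4, Rcurv c D (e i) x y i

/-- scalar curvature: metric trace of the Ricci tensor (here `G` is its own inverse). -/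
def scalCurv (G : Matrix (Fin 4) (Fin 4) ℝ) (c : Fin 4 → Fin 4 → V) (D : V → V → V) : ℝ :=
  ∑ i : Fin 4, ∑ j : Fin 4, G i j * ricciT c D (e i) (e j)

/-- metric with ⟨u1,u2⟩=⟨u3,u3⟩=⟨u4,u4⟩=1. -/
def Gpp : Matrix (Fin 4) (Fin 4) ℝ := !![0,1,0,0; 1,0,0,0; 0,0,1,0; 0,0,0,1]

/-- metric with ⟨u1,u1⟩=⟨u2,u2⟩=⟨u3,u4⟩=1. -/
def Gdeg : Matrix (Fin 4) (Fin 4) ℝ := !![1,0,0,0; 0,1,0,0; 0,0,0,1; 0,0,1,0]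

/-- orthonormal metric with e4 timelike. -/
def Gort : Matrix (Fin 4) (Fin 4) ℝ := !![1,0,0,0; 0,1,0,0; 0,0,1,0; 0,0,0,-1]

def cR (h1 h2 h3 g1 g2 g3 : ℝ) : Fin 4 → Fin 4 → V :=
  let b14 : V := ![h1, -g1, -g2, 0]
  let b24 : V := ![g1, h2, -g3, 0]
  let b34 : V := ![g2, g3, h3, 0]
  ![![0, 0, 0, b14],
    ![0, 0, 0, b24],
    ![0, 0, 0, b34],
    ![-b14, -b24, -b34, 0]]

def Dex (h1 h2 h3 g1 g2 g3 : ℝ) (x y : V) : V :=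
  ![x 0 * y 3 * h1 + x 3 * (-(g1 * y 1) - g2 * y 2),
    x 1 * y 3 * h2 + x 3 * (g1 * y 0 - g3 * y 2),
    x 2 * y 3 * h3 + x 3 * (g2 * y 0 + g3 * y 1),
    x 0 * y 0 * h1 + x 1 * y 1 * h2 + x 2 * y 2 * h3]


lemma e0 : e 0 = ![1,0,0,0] := by funext k; fin_cases k <;> simp [e, Pi.single_apply]
lemma e1 : e 1 = ![0,1,0,0] := by funext k; fin_cases k <;> simp [e, Pi.single_apply]
lemma e2 : e 2 = ![0,0,1,0] := by funext k; fin_cases k <;> simp [e, Pi.single_apply]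
lemma e3 : e 3 = ![0,0,0,1] := by funext k; fin_cases k <;> simp [e, Pi.single_apply]

set_option maxHeartbeats 4000000 in
/-- scalar curvature equals 2(η1²+η2²+η3²+η1η2+η1η3+η2η3) and vanishes
iff η1 = η2 = η3 = 0. -/
theorem stmt3 (h1 h2 h3 g1 g2 g3 : ℝ) (D : V → V → V)
    (hD : Koszul Gort (cR h1 h2 h3 g1 g2 g3) D) :
    scalCurv Gort (cR h1 h2 h3 g1 g2 g3) D =
      2 * (h1^2 + h2^2 + h3^2 + h1*h2 + h1*h3 + h2*h3) ∧
    (scalCurv Gort (cR h1 h2 h3 g1 g2 g3) D = 0 ↔ h1 = 0 ∧ h2 = 0 ∧ h3 = 0) := by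
  have hDval : ∀ (x y : V) (k : Fin 4), D x y k =
      (gmet Gort (br (cR h1 h2 h3 g1 g2 g3) x y) (e k)
        - gmet Gort (br (cR h1 h2 h3 g1 g2 g3) y (e k)) x
        + gmet Gort (br (cR h1 h2 h3 g1 g2 g3) (e k) x) y) * Gort k k / 2 := by
    intro x y k
    have h := hD x y (e k)
    have hg : gmet Gort (D x y) (e k) = D x y k * Gort k k := by
      fin_cases k <;>
        norm_num [gmet, e, Gort, Fin.sum_univ_four, Pi.single_apply,
          Matrix.cons_val_zero, Matrix.cons_val_one, Matrix.head_cons,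
          Matrix.cons_val_two, Matrix.cons_val_three, Matrix.vecHead, Matrix.vecTail,
          Matrix.cons_val', Matrix.empty_val', Matrix.cons_val_fin_one] <;> rfl
    rw [hg] at h
    have hkk : Gort k k = 1 ∨ Gort k k = -1 := by
      fin_cases k <;>
        norm_num [Gort, Matrix.cons_val_zero, Matrix.cons_val_one, Matrix.head_cons,
          Matrix.cons_val_two, Matrix.cons_val_three, Matrix.vecHead, Matrix.vecTail]
    rcases hkk with hk | hk <;> rw [hk] at h ⊢ <;> linarith
  have hDex : ∀ x y : V, D x y = Dex h1 h2 h3 g1 g2 g3 x y := by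
    intro x y
    funext k
    rw [hDval]
    fin_cases k <;>
      · norm_num [Dex, gmet, br, cR, e, Pi.single_apply, Gort, Fin.sum_univ_four,
          Finset.sum_apply, Pi.smul_apply, smul_eq_mul,
          Matrix.cons_val_zero, Matrix.cons_val_one, Matrix.head_cons,
          Matrix.cons_val_two, Matrix.cons_val_three, Matrix.vecHead, Matrix.vecTail,
          Matrix.cons_val', Matrix.empty_val', Matrix.cons_val_fin_one, Matrix.of_apply,
          ite_apply, Pi.zero_apply]
        ring
  have key : scalCurv Gort (cR h1 h2 h3 g1 g2 g3) D =
      2 * (h1^2 + h2^2 + h3^2 + h1*h2 + h1*h3 + h2*h3) := by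
    simp only [scalCurv, Fin.sum_univ_four, Gort,
      Matrix.cons_val_zero, Matrix.cons_val_one, Matrix.cons_val_two, Matrix.cons_val_three,
      Matrix.head_cons, Matrix.tail_cons, Matrix.vecHead, Matrix.cons_val_succ,
      Matrix.cons_val', Matrix.empty_val', Matrix.cons_val_fin_one, Matrix.of_apply,
      Fin.isValue, zero_mul, one_mul, neg_mul, add_zero, zero_add]
    simp only [ricciT, Rcurv, Pi.sub_apply, hDex, Fin.sum_univ_four, e0, e1, e2, e3]
    simp (config := { maxSteps := 100000000 }) only [Dex, br, cR, Fin.sum_univ_four,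
      Finset.sum_apply, Pi.smul_apply, smul_eq_mul,
      Matrix.cons_val_zero, Matrix.cons_val_one, Matrix.cons_val_two, Matrix.cons_val_three,
      Matrix.head_cons, Matrix.tail_cons, Matrix.vecHead, Matrix.cons_val_succ,
      Matrix.cons_val', Matrix.empty_val', Matrix.cons_val_fin_one, Matrix.of_apply,
      Pi.neg_apply, Pi.zero_apply, ite_apply, Function.comp_apply, Fin.isValue, mul_zero, zero_mul,
      mul_one, one_mul, add_zero, zero_add, neg_zero, sub_zero, zero_sub, mul_neg, neg_mul,
      neg_neg, zero_smul, smul_zero]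
    ring
  refine ⟨key, ?_⟩
  rw [key]
  constructor
  · intro h0
    have hsum : (h1 + h2)^2 + (h1 + h3)^2 + (h2 + h3)^2 = 0 := by nlinarith
    have h12 : h1 + h2 = 0 := by nlinarith [sq_nonneg (h1+h2), sq_nonneg (h1+h3), sq_nonneg (h2+h3)]
    have h13 : h1 + h3 = 0 := by nlinarith [sq_nonneg (h1+h2), sq_nonneg (h1+h3), sq_nonneg (h2+h3)]
    have h23 : h2 + h3 = 0 := by nlinarith [sq_nonneg (h1+h2), sq_nonneg (h1+h3), sq_nonneg (h2+h3)]
    exact ⟨by linarith, by linarith, by linarith⟩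
  · rintro ⟨rfl, rfl, rfl⟩
    ring
end
end

section
/- Let g be the Lorentzian metric Lie algebra on pseudo-orthonormal basis u1,u2,u3,u4 (with ⟨u1,u2⟩=⟨u3,u3⟩=⟨u4,u4⟩=1) and brackets [u1,u4]=γ1 u1 + u2 − γ3 u3, [u2,u4]=−γ1 u2, [u3,u4]=γ3 u2 with γ1 ≠ 0. Then the left-invariant vector field determined by u2 is null and recurrent: ∇_{u1} u2 = ∇_{u2} u2 = ∇_{u3} u2 = 0 and ∇_{u4} u2 = γ1 u2, where ∇ is determined by the Koszul formula on the Lie algebra. -/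
noncomputable section

open Finset Polynomial

def c0 (g1 g3 : ℝ) : Fin 4 → Fin 4 → V :=
  let b14 : V := ![g1, 1, -g3, 0]
  let b24 : V := ![0, -g1, 0, 0]
  let b34 : V := ![0, g3, 0, 0]
  ![![0, 0, 0, b14],
    ![0, 0, 0, b24],
    ![0, 0, 0, b34],
    ![-b14, -b24, -b34, 0]]

/-!
For basis vectors the Koszul formula expresses `⟨∇_{u_i} u_j, u_k⟩` through the structure
constants alone, and since the metric is nondegenerate (`Gpp` is an involution) these inner
products determine `∇_{u_i} u_j`.
-/

open Matrix

lemma gmet_apply_e_right (G : Matrix (Fin 4) (Fin 4) ℝ) (x : V) (k : Fin 4) :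
    gmet G x (e k) = (x ᵥ* G) k := by
  simp [gmet, e, vecMul, dotProduct, Pi.single_apply]

lemma gmet_e_e (G : Matrix (Fin 4) (Fin 4) ℝ) (i j : Fin 4) : gmet G (e i) (e j) = G i j := by
  rw [gmet_apply_e_right, e, single_one_vecMul, row_apply]

lemma br_e_e (c : Fin 4 → Fin 4 → V) (i j : Fin 4) : br c (e i) (e j) = c i j := by
  simp [br, e, Pi.single_apply]

lemma Koszul.apply_e_e_eq {G : Matrix (Fin 4) (Fin 4) ℝ} {c : Fin 4 → Fin 4 → V} {D : V → V → V}
    (hD : Koszul G c D) (hG : IsUnit G) {i j : Fin 4} {w : V}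
    (h : ∀ k, (c i j ᵥ* G) k - (c j k ᵥ* G) i + (c k i ᵥ* G) j = 2 * (w ᵥ* G) k) :
    D (e i) (e j) = w :=
  vecMul_injective_of_isUnit hG <| funext fun k => by
    have := hD (e i) (e j) (e k)
    simp only [br_e_e, gmet_apply_e_right, h k] at this
    linarith

lemma Gpp_mul_self : Gpp * Gpp = 1 := by
  ext i j
  fin_cases i <;> fin_cases j <;> simp [Gpp, mul_apply, Fin.sum_univ_four]

lemma isUnit_Gpp : IsUnit Gpp :=
  IsUnit.of_mul_eq_one _ Gpp_mul_self

lemma vecMul_Gpp (x : V) : x ᵥ* Gpp = ![x 1, x 0, x 2, x 3] := by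
  ext k
  fin_cases k <;> simp [Gpp, vecHead, vecTail]

theorem stmt7_general (g1 g3 : ℝ) (D : V → V → V)
    (hD : Koszul Gpp (c0 g1 g3) D) :
    gmet Gpp (e 1) (e 1) = 0 ∧
    D (e 0) (e 1) = 0 ∧ D (e 1) (e 1) = 0 ∧ D (e 2) (e 1) = 0 ∧
    D (e 3) (e 1) = g1 • e 1 := by
  refine ⟨by simp [gmet_e_e, Gpp], ?_, ?_, ?_, ?_⟩ <;>
    refine hD.apply_e_e_eq isUnit_Gpp fun k => ?_ <;>
    fin_cases k <;> simp [vecMul_Gpp, c0, e, two_mul]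

/-- u2 is null and recurrent. -/
theorem stmt7 (g1 g3 : ℝ) (hg1 : g1 ≠ 0) (D : V → V → V)
    (hD : Koszul Gpp (c0 g1 g3) D) :
    gmet Gpp (e 1) (e 1) = 0 ∧
    D (e 0) (e 1) = 0 ∧ D (e 1) (e 1) = 0 ∧ D (e 2) (e 1) = 0 ∧
    D (e 3) (e 1) = g1 • e 1 :=
  stmt7_general g1 g3 D hD
end
end

section
/- Let g be the Lorentzian metric Lie algebra on pseudo-orthonormal basis u1,u2,u3,u4 (⟨u1,u1⟩=⟨u2,u2⟩=⟨u3,u4⟩=1) with brackets [u1,u4]=γ1 u1 − γ2 u2 + γ3 u3, [u2,u4]=γ2 u1 + γ4 u2 + γ5 u3, [u3,u4]=γ8 u3. Then u3 is a recurrent null vector: ∇_{u1} u3 = ∇_{u2} u3 = ∇_{u3} u3 = 0 and ∇_{u4} u3 = −γ8 u3. -/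
noncomputable section

open Finset Polynomial

def c9 (g1 g2 g3 g4 g5 g8 : ℝ) : Fin 4 → Fin 4 → V :=
  let b14 : V := ![g1, -g2, g3, 0]
  let b24 : V := ![g2, g4, g5, 0]
  let b34 : V := ![0, 0, g8, 0]
  ![![0, 0, 0, b14],
    ![0, 0, 0, b24],
    ![0, 0, 0, b34],
    ![-b14, -b24, -b34, 0]]

/-! All brackets lie in span(u1, u2, u3) = u3^⊥, and [x, u3] = -γ8 x₄ u3. In the Koszul formula for
2⟨∇_x u3, z⟩ the term ⟨[z,x], u3⟩ therefore vanishes and the other two give -2γ8 x₄ z₄, so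
∇_x u3 = -γ8 x₄ u3 for every x. Indices are 0-based: u3 is `e 2` and x₄ is `x 3`. -/

lemma gmet_Gdeg_apply (x y : V) :
    gmet Gdeg x y = x 0 * y 0 + x 1 * y 1 + x 2 * y 3 + x 3 * y 2 := by
  simp [gmet, Gdeg, Fin.sum_univ_four]

lemma eq_of_forall_gmet_Gdeg_eq {v w : V} (h : ∀ z, gmet Gdeg v z = gmet Gdeg w z) : v = w := by
  funext i
  have hz := h (e (Equiv.swap 2 3 i))
  fin_cases i <;> simpa [gmet_Gdeg_apply, e, Equiv.swap_apply_def] using hz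

section c9

variable (g1 g2 g3 g4 g5 g8 : ℝ)

lemma br_c9_apply_three (x y : V) : br (c9 g1 g2 g3 g4 g5 g8) x y 3 = 0 := by
  simp [br, c9, Fin.sum_univ_four]

lemma br_c9_e_two_right (x : V) : br (c9 g1 g2 g3 g4 g5 g8) x (e 2) = (-(g8 * x 3)) • e 2 := by
  funext k
  fin_cases k <;> simp [br, c9, e, Fin.sum_univ_four, mul_comm]

lemma br_c9_e_two_left (z : V) : br (c9 g1 g2 g3 g4 g5 g8) (e 2) z = (g8 * z 3) • e 2 := by
  funext k
  fin_cases k <;> simp [br, c9, e, Fin.sum_univ_four, mul_comm]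

theorem levi_civita_c9_e_two {D : V → V → V} (hD : Koszul Gdeg (c9 g1 g2 g3 g4 g5 g8) D) (x : V) :
    D x (e 2) = (-(g8 * x 3)) • e 2 := by
  refine eq_of_forall_gmet_Gdeg_eq fun z => ?_
  have hz := hD x (e 2) z
  rw [br_c9_e_two_right, br_c9_e_two_left] at hz
  simp only [gmet_Gdeg_apply, br_c9_apply_three] at hz ⊢
  simp [e] at hz ⊢
  linarith

end c9

/-- u3 is a recurrent null vector. -/
theorem stmt9 (g1 g2 g3 g4 g5 g8 : ℝ) (D : V → V → V)
    (hD : Koszul Gdeg (c9 g1 g2 g3 g4 g5 g8) D) :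
    gmet Gdeg (e 2) (e 2) = 0 ∧
    D (e 0) (e 2) = 0 ∧ D (e 1) (e 2) = 0 ∧ D (e 2) (e 2) = 0 ∧
    D (e 3) (e 2) = -g8 • e 2 := by
  simp only [levi_civita_c9_e_two g1 g2 g3 g4 g5 g8 hD]
  simp [gmet_Gdeg_apply, e]
end
end

section
/- For the metric Lie algebra on pseudo-orthonormal basis u1,u2,u3,u4 (⟨u1,u1⟩=⟨u2,u2⟩=⟨u3,u4⟩=1) with brackets [u1,u4]=γ1 u1 − γ2 u2 + γ3 u3, [u2,u4]=γ2 u1 + γ4 u2 + γ5 u3, [u3,u4]=γ6 u1 + γ7 u2 + γ8 u3, the scalar curvature equals (1/2)(γ6² + γ7²). In particular the scalar curvature vanishes if and only if γ6 = γ7 = 0. -/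
noncomputable section

open Finset Polynomial

def c10 (g1 g2 g3 g4 g5 g6 g7 g8 : ℝ) : Fin 4 → Fin 4 → V :=
  let b14 : V := ![g1, -g2, g3, 0]
  let b24 : V := ![g2, g4, g5, 0]
  let b34 : V := ![g6, g7, g8, 0]
  ![![0, 0, 0, b14],
    ![0, 0, 0, b24],
    ![0, 0, 0, b34],
    ![-b14, -b24, -b34, 0]]

/-!
The metric is nondegenerate, so the Koszul formula determines the Levi-Civita connection and it
suffices to exhibit one solution of it. For that connection the four Ricci entries entering the
`Gdeg`-trace are computed directly.
-/

open Matrix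

theorem gmet_eq_vecMul_dotProduct (G : Matrix (Fin 4) (Fin 4) ℝ) (x y : V) :
    gmet G x y = x ᵥ* G ⬝ᵥ y := by
  simp only [gmet, dotProduct, vecMul, Finset.sum_mul]
  rw [Finset.sum_comm]
  exact Finset.sum_congr rfl fun _ _ => Finset.sum_congr rfl fun _ _ => by ring

theorem gmet_sub_left (G : Matrix (Fin 4) (Fin 4) ℝ) (x y z : V) :
    gmet G (x - y) z = gmet G x z - gmet G y z := by
  simp only [gmet_eq_vecMul_dotProduct, sub_vecMul, sub_dotProduct]

theorem Koszul.unique {G : Matrix (Fin 4) (Fin 4) ℝ} (hG : G.det ≠ 0) {c : Fin 4 → Fin 4 → V}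
    {D D' : V → V → V} (hD : Koszul G c D) (hD' : Koszul G c D') : D = D' := by
  funext x y
  have hzero : (D x y - D' x y) ᵥ* G = 0 := by
    funext j
    have h := (hD x y (e j)).trans (hD' x y (e j)).symm
    have : gmet G (D x y - D' x y) (e j) = 0 := by rw [gmet_sub_left]; linarith
    simpa [gmet_eq_vecMul_dotProduct, e] using this
  by_contra hne
  exact hG (exists_vecMul_eq_zero_iff.mp ⟨_, sub_ne_zero.mpr hne, hzero⟩)

theorem det_Gdeg : Gdeg.det = -1 := by
  simp [Gdeg, det_succ_row_zero, Fin.sum_univ_succ]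

theorem scalCurv_Gdeg (c : Fin 4 → Fin 4 → V) (D : V → V → V) :
    scalCurv Gdeg c D = ricciT c D (e 0) (e 0) + ricciT c D (e 1) (e 1) +
      ricciT c D (e 2) (e 3) + ricciT c D (e 3) (e 2) := by
  simp [scalCurv, Gdeg, Fin.sum_univ_four]

-- Read off from the Koszul formula tested against `e 0, e 1, e 3, e 2`, the `Gdeg`-dual basis.
def leviCivitaC10 (g1 g2 g3 g4 g5 g6 g7 g8 : ℝ) (x y : V) : V := ![
  g1*x 0*y 3 - g2*x 3*y 1 + g3*x 3*y 3 + (g6/2)*(x 2*y 3 - x 3*y 2),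
  g2*x 3*y 0 + g4*x 1*y 3 + g5*x 3*y 3 + (g7/2)*(x 2*y 3 - x 3*y 2),
  -(g1*x 0*y 0) - g4*x 1*y 1 - g3*x 3*y 0 - g5*x 3*y 1 - g8*x 3*y 2
    - (g6/2)*(x 0*y 2 + x 2*y 0) - (g7/2)*(x 1*y 2 + x 2*y 1),
  g8*x 3*y 3 + (g6/2)*(x 0*y 3 + x 3*y 0) + (g7/2)*(x 1*y 3 + x 3*y 1)]

theorem koszul_leviCivitaC10 (g1 g2 g3 g4 g5 g6 g7 g8 : ℝ) :
    Koszul Gdeg (c10 g1 g2 g3 g4 g5 g6 g7 g8) (leviCivitaC10 g1 g2 g3 g4 g5 g6 g7 g8) := by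
  intro x y z
  simp only [gmet, br, c10, Gdeg, leviCivitaC10, Fin.isValue, of_apply, cons_val', cons_val_fin_one,
    Fin.sum_univ_four, cons_val_zero, cons_val_one, Matrix.cons_val, neg_cons, neg_neg, neg_zero,
    Matrix.neg_empty, Finset.sum_apply, Pi.add_apply, Pi.smul_apply, Pi.zero_apply, smul_eq_mul]
  ring

theorem ricciT_leviCivitaC10 (g1 g2 g3 g4 g5 g6 g7 g8 : ℝ) :
    let ρ := ricciT (c10 g1 g2 g3 g4 g5 g6 g7 g8) (leviCivitaC10 g1 g2 g3 g4 g5 g6 g7 g8)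
    ρ (e 0) (e 0) = -(g6 ^ 2 / 2) ∧ ρ (e 1) (e 1) = -(g7 ^ 2 / 2) ∧
      ρ (e 2) (e 3) = (g6 ^ 2 + g7 ^ 2) / 2 ∧ ρ (e 3) (e 2) = (g6 ^ 2 + g7 ^ 2) / 2 := by
  refine ⟨?_, ?_, ?_, ?_⟩ <;>
  simp only [ricciT, Rcurv, leviCivitaC10, br, c10, e, Fin.isValue, Pi.single_apply, Fin.reduceEq,
    one_ne_zero, zero_ne_one, Matrix.cons_val, cons_val_one, cons_val_zero, cons_val',
    cons_val_fin_one, sub_cons, neg_cons, head_cons, tail_cons, Matrix.neg_empty, mul_ite, ite_mul,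
    ite_smul, ite_self, mul_one, mul_zero, one_mul, zero_mul, one_smul, zero_smul, sum_ite_eq',
    mem_univ, ↓reduceIte, Finset.sum_apply, Fin.sum_univ_four, Pi.zero_apply, Pi.sub_apply] <;>
  ring

/-- scalar curvature equals (1/2)(γ6²+γ7²), vanishing iff γ6=γ7=0. -/
theorem stmt10 (g1 g2 g3 g4 g5 g6 g7 g8 : ℝ) (D : V → V → V)
    (hD : Koszul Gdeg (c10 g1 g2 g3 g4 g5 g6 g7 g8) D) :
    scalCurv Gdeg (c10 g1 g2 g3 g4 g5 g6 g7 g8) D = (1/2) * (g6^2 + g7^2) ∧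
    (scalCurv Gdeg (c10 g1 g2 g3 g4 g5 g6 g7 g8) D = 0 ↔ g6 = 0 ∧ g7 = 0) := by
  obtain rfl : D = leviCivitaC10 g1 g2 g3 g4 g5 g6 g7 g8 :=
    Koszul.unique (by simp [det_Gdeg]) hD (koszul_leviCivitaC10 _ _ _ _ _ _ _ _)
  obtain ⟨h00, h11, h23, h32⟩ := ricciT_leviCivitaC10 g1 g2 g3 g4 g5 g6 g7 g8
  have hscal : scalCurv Gdeg (c10 g1 g2 g3 g4 g5 g6 g7 g8) (leviCivitaC10 g1 g2 g3 g4 g5 g6 g7 g8) =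
      (1/2) * (g6^2 + g7^2) := by
    rw [scalCurv_Gdeg, h00, h11, h23, h32]
    ring
  refine ⟨hscal, ?_⟩
  rw [hscal]
  simp [sq, mul_self_add_mul_self_eq_zero]
end
end

section
/- For the Lorentzian metric Lie algebra on pseudo-orthonormal basis u1,u2,u3,u4 (⟨u1,u2⟩=⟨u3,u3⟩=⟨u4,u4⟩=1) with brackets [u1,u4]=γ1 u1 + u2, [u2,u4]=−γ1 u2, [u3,u4]=η2 u3 where γ1 = −(1/4)(1+√5)η2 and η2 ≠ 0, the Ricci operator has characteristic polynomial t²(t+η2²)², i.e., eigenvalues 0 (multiplicity 2) and −η2² (multiplicity 2). -/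
noncomputable section

open Finset Polynomial

def c12 (g1 h2 : ℝ) : Fin 4 → Fin 4 → V :=
  let b14 : V := ![g1, 1, 0, 0]
  let b24 : V := ![0, -g1, 0, 0]
  let b34 : V := ![0, 0, h2, 0]
  ![![0, 0, 0, b14],
    ![0, 0, 0, b24],
    ![0, 0, 0, b34],
    ![-b14, -b24, -b34, 0]]

/-!
Testing the Koszul formula against the basis vectors determines the Levi-Civita connection
explicitly. Feeding it into the curvature gives the Ricci form
`ρ = -(η₂ + 2γ₁) u¹ ⊗ u¹ - η₂² (u³ ⊗ u³ + u⁴ ⊗ u⁴)`. Raising an index with the metric, whose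
`⟨u₁, u₂⟩ = 1` swaps the first two coordinates, the Ricci operator sends `u₁` into `ℝ u₂`, kills
`u₂` and acts as `-η₂²` on `u₃, u₄`: it is lower triangular with diagonal `(0, 0, -η₂², -η₂²)`.
-/

theorem Matrix.charpoly_of_isLowerTriangular {n R : Type*} [Fintype n] [DecidableEq n]
    [LinearOrder n] [CommRing R] (M : Matrix n n R) (h : M.IsLowerTriangular) :
    M.charpoly = ∏ i : n, (X - C (M i i)) := by
  rw [← Matrix.charpoly_transpose]
  exact Matrix.charpoly_of_isUpperTriangular M.transpose h.transpose

lemma gmet_Gpp (x y : V) : gmet Gpp x y = x 0 * y 1 + x 1 * y 0 + x 2 * y 2 + x 3 * y 3 := by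
  simp [gmet, Gpp, Fin.sum_univ_four]

lemma br_c12 (g1 h2 : ℝ) (x y : V) : br (c12 g1 h2) x y =
    ![g1 * (x 0 * y 3 - x 3 * y 0), x 0 * y 3 - x 3 * y 0 - g1 * (x 1 * y 3 - x 3 * y 1),
      h2 * (x 2 * y 3 - x 3 * y 2), 0] := by
  funext k
  fin_cases k <;> simp [br, c12, Fin.sum_univ_four] <;> ring

lemma koszul_c12_apply {g1 h2 : ℝ} {D : V → V → V} (hD : Koszul Gpp (c12 g1 h2) D) (x y : V) :
    D x y = ![-(g1 * x 3 * y 0), x 0 * y 3 + g1 * x 3 * y 1, h2 * x 2 * y 3,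
      -(x 0 * y 0) - h2 * x 2 * y 2] := by
  have hk0 := hD x y (e 0)
  have hk1 := hD x y (e 1)
  have hk2 := hD x y (e 2)
  have hk3 := hD x y (e 3)
  simp only [gmet_Gpp, br_c12, e, Pi.single_apply, Matrix.cons_val, Fin.reduceEq, ite_true,
    ite_false] at hk0 hk1 hk2 hk3
  funext k
  fin_cases k <;> simp only [Fin.zero_eta, Fin.mk_one, Fin.reduceFinMk, Matrix.cons_val]
  · linear_combination hk1 / 2
  · linear_combination hk0 / 2
  · linear_combination hk2 / 2
  · linear_combination hk3 / 2

lemma ricciT_c12 {g1 h2 : ℝ} {D : V → V → V} (hD : Koszul Gpp (c12 g1 h2) D) (x y : V) :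
    ricciT (c12 g1 h2) D x y = -(h2 + 2 * g1) * x 0 * y 0 - h2 ^ 2 * (x 2 * y 2 + x 3 * y 3) := by
  simp only [ricciT, Rcurv, koszul_c12_apply hD, br_c12, e, Fin.sum_univ_four, Pi.sub_apply,
    Pi.single_apply, Matrix.cons_val, Fin.reduceEq, ite_true, ite_false]
  ring

lemma Gpp_mul_ricciT_c12 {g1 h2 : ℝ} {D : V → V → V} (hD : Koszul Gpp (c12 g1 h2) D) :
    (Gpp * Matrix.of fun i j => ricciT (c12 g1 h2) D (e i) (e j)) =
      !![0, 0, 0, 0; -(h2 + 2 * g1), 0, 0, 0; 0, 0, -h2 ^ 2, 0; 0, 0, 0, -h2 ^ 2] := by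
  ext i j
  fin_cases i <;> fin_cases j <;>
    simp [Gpp, Matrix.mul_apply, Fin.sum_univ_four, ricciT_c12 hD, e]

theorem stmt12_general (h2 : ℝ) (g1 : ℝ) (D : V → V → V) (hD : Koszul Gpp (c12 g1 h2) D) :
    (Gpp * Matrix.of fun i j => ricciT (c12 g1 h2) D (e i) (e j)).charpoly =
      X^2 * (X + C (h2^2))^2 := by
  rw [Gpp_mul_ricciT_c12 hD, Matrix.charpoly_of_isLowerTriangular]
  · simp only [Fin.prod_univ_four, Matrix.of_apply, Matrix.cons_val, map_zero, map_neg, map_pow]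
    ring
  · intro i j hij
    rw [OrderDual.toDual_lt_toDual] at hij
    fin_cases i <;> fin_cases j <;> simp_all

/-- the Ricci operator has characteristic polynomial t²(t+η2²)². -/
theorem stmt12 (h2 : ℝ) (hh2 : h2 ≠ 0)
    (g1 : ℝ) (hg1 : g1 = -(1/4) * (1 + Real.sqrt 5) * h2)
    (D : V → V → V) (hD : Koszul Gpp (c12 g1 h2) D) :
    (Gpp * Matrix.of fun i j => ricciT (c12 g1 h2) D (e i) (e j)).charpoly =
      X^2 * (X + C (h2^2))^2 :=
  stmt12_general h2 g1 D hD
end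
end

section
/- Let g be the Lie algebra on basis v1,v2,v3,v4 with brackets [v1,v3]=λ1 v2, [v2,v3]=−λ1 v1, [v1,v4]=γ1 v1 + γ2 v2, [v2,v4]=−γ2 v1 + γ1 v2 (others zero), with inner product ⟨v1,v1⟩=⟨v2,v2⟩=⟨v3,v4⟩=1 (other products zero). Then v3 is a parallel null vector: ∇_x v3 = 0 for all x ∈ g, where ∇ is the Levi-Civita connection from the Koszul formula. -/
noncomputable section

open Finset Polynomial

def c16 (l1 g1 g2 : ℝ) : Fin 4 → Fin 4 → V :=
  let b13 : V := ![0, l1, 0, 0]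
  let b23 : V := ![-l1, 0, 0, 0]
  let b14 : V := ![g1, g2, 0, 0]
  let b24 : V := ![-g2, g1, 0, 0]
  ![![0, 0, b13, b14],
    ![0, 0, b23, b24],
    ![-b13, -b23, 0, 0],
    ![-b14, -b24, 0, 0]]

/-- v3 is a parallel null vector. -/
theorem stmt16 (l1 g1 g2 : ℝ) (D : V → V → V)
    (hD : Koszul Gdeg (c16 l1 g1 g2) D) :
    gmet Gdeg (e 2) (e 2) = 0 ∧ ∀ x : V, D x (e 2) = 0 := by
  constructor
  · simp [gmet, Gdeg, e, Fin.sum_univ_four, Pi.single_apply]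
  · intro x
    have h0 := hD x (e 2) (e 0)
    have h1 := hD x (e 2) (e 1)
    have h2 := hD x (e 2) (e 3)
    have h3 := hD x (e 2) (e 2)
    simp [gmet, br, c16, Gdeg, e, Fin.sum_univ_four, Pi.single_apply, Matrix.vecHead, Matrix.vecTail] at h0 h1 h2 h3
    funext j
    fin_cases j
    · show D x (Pi.single 2 1) 0 = 0; linear_combination h0 / 2
    · show D x (Pi.single 2 1) 1 = 0; linear_combination h1 / 2
    · show D x (Pi.single 2 1) 2 = 0; exact h2
    · show D x (Pi.single 2 1) 3 = 0; exact h3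
end
end

section
/- For the metric Lie algebra with basis u1,u2,u3,u4, Lorentzian inner product ⟨u1,u2⟩=⟨u3,u3⟩=⟨u4,u4⟩=1 (others zero), and brackets [u1,u2]=u1+λu3, [u1,u3]=−λu1, [u2,u3]=λu2+u3, [u1,u4]=γ1λu1+γ2λ²u3, [u2,u4]=γ3u1−(γ1−γ2)λu2−(γ1−γ2−γ3λ)u3, [u3,u4]=−γ3λu1−γ2λ²u2−γ2λu3 with λ ≠ 0, the scalar curvature equals −(3/2)(γ2²+1)λ², which is strictly negative; hence the Ricci operator is never nilpotent. -/
noncomputable section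

open Finset Polynomial

def c17 (l g1 g2 g3 : ℝ) : Fin 4 → Fin 4 → V :=
  let b12 : V := ![1, 0, l, 0]
  let b13 : V := ![-l, 0, 0, 0]
  let b23 : V := ![0, l, 1, 0]
  let b14 : V := ![g1 * l, 0, g2 * l^2, 0]
  let b24 : V := ![g3, -(g1 - g2) * l, -(g1 - g2 - g3 * l), 0]
  let b34 : V := ![-g3 * l, -g2 * l^2, -g2 * l, 0]
  ![![0, b12, b13, b14],
    ![-b12, 0, b23, b24],
    ![-b13, -b23, 0, b34],
    ![-b14, -b24, -b34, 0]]


lemma e_val : e = ![![1,0,0,0],![0,1,0,0],![0,0,1,0],![0,0,0,1]] := by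
  funext i j
  fin_cases i <;> fin_cases j <;>
    simp [e, Pi.single_apply, Matrix.vecHead, Matrix.vecTail, Matrix.cons_val_zero, Matrix.cons_val_one, Matrix.head_cons,
      Matrix.cons_val_two, Matrix.tail_cons, Matrix.cons_val_three]

/-- Christoffel structure constants for `c17` w.r.t. `Gpp`. -/
def dc (l g1 g2 g3 : ℝ) : Fin 4 → Fin 4 → V :=
  ![![![0,0,0,0], ![0,0,l/2,-(l*g2)/2], ![-(l/2),0,0,0], ![l*g2/2,0,0,0]],
    ![![-1,0,-(l/2),-(l*g2)/2], ![0,1,0,-g3], ![0,l/2,0,(g1-g2)/2], ![g3,l*g2/2,(g2-g1)/2,0]],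
    ![![l/2,0,0,0], ![0,-(l/2),-1,(g1-g2)/2], ![1,0,0,l*g2], ![(g2-g1)/2,0,-(l*g2),0]],
    ![![l*g2/2-l*g1,0,-(l^2*g2),0], ![0,-(l*g2)/2+l*g1,(g1-g2)/2-l*g3,0],
      ![(g2-g1)/2+l*g3,l^2*g2,0,0], ![0,0,0,0]]]

lemma D_eq17 (l g1 g2 g3 : ℝ) (D : V → V → V)
    (hD : Koszul Gpp (c17 l g1 g2 g3) D) : D = br (dc l g1 g2 g3) := by
  funext x y k
  fin_cases k
  · have h := hD x y (e 1)
    simp [gmet, br, c17, dc, e_val, Gpp, Fin.sum_univ_four, Matrix.vecHead, Matrix.vecTail,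
      Matrix.cons_val_zero, Matrix.cons_val_one, Matrix.head_cons, Matrix.cons_val_two,
      Matrix.tail_cons, Matrix.cons_val_three] at h ⊢
    linear_combination h / 2
  · have h := hD x y (e 0)
    simp [gmet, br, c17, dc, e_val, Gpp, Fin.sum_univ_four, Matrix.vecHead, Matrix.vecTail,
      Matrix.cons_val_zero, Matrix.cons_val_one, Matrix.head_cons, Matrix.cons_val_two,
      Matrix.tail_cons, Matrix.cons_val_three] at h ⊢
    linear_combination h / 2
  · have h := hD x y (e 2)
    simp [gmet, br, c17, dc, e_val, Gpp, Fin.sum_univ_four, Matrix.vecHead, Matrix.vecTail,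
      Matrix.cons_val_zero, Matrix.cons_val_one, Matrix.head_cons, Matrix.cons_val_two,
      Matrix.tail_cons, Matrix.cons_val_three] at h ⊢
    linear_combination h / 2
  · have h := hD x y (e 3)
    simp [gmet, br, c17, dc, e_val, Gpp, Fin.sum_univ_four, Matrix.vecHead, Matrix.vecTail,
      Matrix.cons_val_zero, Matrix.cons_val_one, Matrix.head_cons, Matrix.cons_val_two,
      Matrix.tail_cons, Matrix.cons_val_three] at h ⊢
    linear_combination h / 2

lemma br_left (c : Fin 4 → Fin 4 → V) (i : Fin 4) (y : V) :
    br c (e i) y = ∑ j : Fin 4, y j • c i j := by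
  fin_cases i <;> funext k <;>
    simp [br, e_val, Fin.sum_univ_four, Finset.sum_apply, Pi.smul_apply, Matrix.vecHead,
      Matrix.vecTail, Pi.add_apply, smul_eq_mul]

lemma br_right (c : Fin 4 → Fin 4 → V) (x : V) (j : Fin 4) :
    br c x (e j) = ∑ i : Fin 4, x i • c i j := by
  fin_cases j <;> funext k <;>
    simp [br, e_val, Fin.sum_univ_four, Finset.sum_apply, Pi.smul_apply, Matrix.vecHead,
      Matrix.vecTail, Pi.add_apply, smul_eq_mul]

lemma sum_e_mul (i : Fin 4) (f : Fin 4 → ℝ) : (∑ q : Fin 4, e i q * f q) = f i := by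
  fin_cases i <;> simp [e_val, Fin.sum_univ_four, Matrix.vecHead, Matrix.vecTail]

lemma ric_eval (c d : Fin 4 → Fin 4 → V) (i j : Fin 4) :
    ricciT c (br d) (e i) (e j) =
      ∑ m : Fin 4,
        ((∑ q : Fin 4, d i j q • d m q) - (∑ q : Fin 4, d m j q • d i q)
          - (∑ p : Fin 4, c m i p • d p j)) m := by
  simp only [ricciT, Rcurv, br_left, br_right, Pi.sub_apply, Finset.sum_apply,
    Pi.smul_apply, smul_eq_mul, sum_e_mul]

lemma ric01 (l g1 g2 g3 : ℝ) :
    ricciT (c17 l g1 g2 g3) (br (dc l g1 g2 g3)) (e 0) (e 1) =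
      -(1/2)*l^2 - (1/2)*l^2*g2^2 + (1/2)*l^2*g1*g2 := by
  rw [ric_eval]
  simp [Fin.sum_univ_four, Finset.sum_apply, Pi.sub_apply, Pi.smul_apply, smul_eq_mul,
    dc, c17, Matrix.vecHead, Matrix.vecTail]
  ring

lemma ric10 (l g1 g2 g3 : ℝ) :
    ricciT (c17 l g1 g2 g3) (br (dc l g1 g2 g3)) (e 1) (e 0) =
      -(1/2)*l^2 - (1/2)*l^2*g2^2 + (1/2)*l^2*g1*g2 := by
  rw [ric_eval]
  simp [Fin.sum_univ_four, Finset.sum_apply, Pi.sub_apply, Pi.smul_apply, smul_eq_mul,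
    dc, c17, Matrix.vecHead, Matrix.vecTail]
  ring

lemma ric22 (l g1 g2 g3 : ℝ) :
    ricciT (c17 l g1 g2 g3) (br (dc l g1 g2 g3)) (e 2) (e 2) =
      -(1/2)*l^2 + l^2*g2^2 - l^2*g1*g2 := by
  rw [ric_eval]
  simp [Fin.sum_univ_four, Finset.sum_apply, Pi.sub_apply, Pi.smul_apply, smul_eq_mul,
    dc, c17, Matrix.vecHead, Matrix.vecTail]
  ring

lemma ric33 (l g1 g2 g3 : ℝ) :
    ricciT (c17 l g1 g2 g3) (br (dc l g1 g2 g3)) (e 3) (e 3) =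
      -(3/2)*l^2*g2^2 := by
  rw [ric_eval]
  simp [Fin.sum_univ_four, Finset.sum_apply, Pi.sub_apply, Pi.smul_apply, smul_eq_mul,
    dc, c17, Matrix.vecHead, Matrix.vecTail]
  ring

lemma scal_val17 (l g1 g2 g3 : ℝ) :
    scalCurv Gpp (c17 l g1 g2 g3) (br (dc l g1 g2 g3)) = -(3/2) * (g2^2 + 1) * l^2 := by
  simp [scalCurv, Gpp, Fin.sum_univ_four, Matrix.vecHead, Matrix.vecTail,
    ric01, ric10, ric22, ric33]
  ring

lemma trace_eq17 (c : Fin 4 → Fin 4 → V) (D : V → V → V) :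
    Matrix.trace (Gpp * Matrix.of fun i j => ricciT c D (e i) (e j)) = scalCurv Gpp c D := by
  simp [Matrix.trace, Matrix.diag, Matrix.mul_apply, scalCurv, Gpp, Fin.sum_univ_four,
    Matrix.vecHead, Matrix.vecTail, Matrix.of_apply, Matrix.cons_val_zero, Matrix.cons_val_one, Matrix.head_cons,
    Matrix.cons_val_two, Matrix.tail_cons, Matrix.cons_val_three]
  ring

/-- the scalar curvature equals −(3/2)(γ2²+1)λ² < 0, so the Ricci
operator is never nilpotent. -/
theorem stmt17 (l g1 g2 g3 : ℝ) (hl : l ≠ 0) (D : V → V → V)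
    (hD : Koszul Gpp (c17 l g1 g2 g3) D) :
    scalCurv Gpp (c17 l g1 g2 g3) D = -(3/2) * (g2^2 + 1) * l^2 ∧
    scalCurv Gpp (c17 l g1 g2 g3) D < 0 ∧
    ¬ IsNilpotent (Gpp * Matrix.of fun i j => ricciT (c17 l g1 g2 g3) D (e i) (e j)) := by
  have hDe : D = br (dc l g1 g2 g3) := D_eq17 l g1 g2 g3 D hD
  subst hDe
  have hs := scal_val17 l g1 g2 g3
  have hl2 : 0 < l ^ 2 := lt_of_le_of_ne (sq_nonneg l) (Ne.symm (pow_ne_zero 2 hl))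
  have hneg : -(3/2) * (g2 ^ 2 + 1) * l ^ 2 < 0 := by nlinarith [sq_nonneg g2]
  refine ⟨hs, hs ▸ hneg, fun hn => ?_⟩
  have h0 : Matrix.trace (Gpp * Matrix.of fun i j =>
      ricciT (c17 l g1 g2 g3) (br (dc l g1 g2 g3)) (e i) (e j)) = 0 :=
    isNilpotent_iff_eq_zero.mp (Matrix.isNilpotent_trace_of_isNilpotent hn)
  rw [trace_eq17, hs] at h0
  exact absurd h0 (ne_of_lt hneg)
end
end
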